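/- The function F₃ : ℝ³ → ℝ defined by F₃(s,λ,r) = (1/2048)·cos(8s)·e^{8λ} + (3/128)·cosh(4s)·e^{−8λ} − (1/32)·(s·sinh(4s) − 4λ·cosh(4s) + 12r·sinh(4s))·e^{−8λ} − (49/2048 − λ/4 + (3/64)·(16r − s)² + λ²)·e^{8λ} satisfies the partial differential equation ∂³F₃/∂s³ + 5·∂²F₃/∂s∂λ + 4·∂F₃/∂r + 24·∂F₃/∂s = 0 at every point of ℝ³. -/

import Mathlib

/-- The generating function of the genus-3 Donaldson invariants of Σ₃ × ℙ¹:
    F₃(s,λ,r) = (1/2048)·cos(8s)·e^{8λ} + (3/128)·cosh(4s)·e^{−8λ}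
      − (1/32)·(s·sinh(4s) − 4λ·cosh(4s) + 12r·sinh(4s))·e^{−8λ}
      − (49/2048 − λ/4 + (3/64)·(16r − s)² + λ²)·e^{8λ}. -/
noncomputable def F₃ (s l r : ℝ) : ℝ :=
  (1 / 2048) * Real.cos (8 * s) * Real.exp (8 * l)
    + (3 / 128) * Real.cosh (4 * s) * Real.exp (-8 * l)
    - (1 / 32) * (s * Real.sinh (4 * s) - 4 * l * Real.cosh (4 * s)
        + 12 * r * Real.sinh (4 * s)) * Real.exp (-8 * l)
    - (49 / 2048 - l / 4 + (3 / 64) * (16 * r - s) ^ 2 + l ^ 2) * Real.exp (8 * l)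

/-!
The operator has symbol `P(a, b, c) = a³ + 5ab + 4c + 24a`, which vanishes at `(±8i, 8, 0)` and
`(±4, -8, 0)`, the exponents occurring in `F₃`; in fact each of the four summands of `F₃` is
annihilated separately. All partial derivatives involved are exponential polynomials of the same
shape, so once they are computed in closed form the equation is a ring identity.
-/

open Real

noncomputable section

def F₃_s (s l r : ℝ) : ℝ :=
  -(1 / 256) * sin (8 * s) * exp (8 * l)
    + (1 / 16) * ((1 + 8 * l) * sinh (4 * s) - 2 * (s + 12 * r) * cosh (4 * s)) * exp (-8 * l)
    + (3 / 32) * (16 * r - s) * exp (8 * l)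

def F₃_ss (s l r : ℝ) : ℝ :=
  -(1 / 32) * cos (8 * s) * exp (8 * l)
    + (1 / 8) * ((1 + 16 * l) * cosh (4 * s) - 4 * (s + 12 * r) * sinh (4 * s)) * exp (-8 * l)
    - (3 / 32) * exp (8 * l)

def F₃_sss (s l r : ℝ) : ℝ :=
  (1 / 4) * sin (8 * s) * exp (8 * l)
    + (8 * l * sinh (4 * s) - 2 * (s + 12 * r) * cosh (4 * s)) * exp (-8 * l)

def F₃_l (s l r : ℝ) : ℝ :=
  (1 / 256) * cos (8 * s) * exp (8 * l)
    + (1 / 4) * ((s + 12 * r) * sinh (4 * s) - (1 / 4 + 4 * l) * cosh (4 * s)) * exp (-8 * l)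
    - (8 * (49 / 2048 - l / 4 + (3 / 64) * (16 * r - s) ^ 2 + l ^ 2) + 2 * l - 1 / 4)
        * exp (8 * l)

def F₃_sl (s l r : ℝ) : ℝ :=
  -(1 / 32) * sin (8 * s) * exp (8 * l)
    + ((s + 12 * r) * cosh (4 * s) - 4 * l * sinh (4 * s)) * exp (-8 * l)
    + (3 / 4) * (16 * r - s) * exp (8 * l)

def F₃_r (s l r : ℝ) : ℝ :=
  -(3 / 8) * sinh (4 * s) * exp (-8 * l) - (3 / 2) * (16 * r - s) * exp (8 * l)

end

section PartialDerivatives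

variable (s l r : ℝ)

theorem deriv_F₃_s : deriv (fun s' => F₃ s' l r) s = F₃_s s l r := by
  simp (disch := fun_prop) only [F₃, F₃_s, deriv_fun_add, deriv_fun_sub, deriv_fun_mul,
    deriv_fun_pow, deriv.fun_neg', deriv_const', deriv_const_mul_id', deriv_const_sub_id',
    deriv_div_const, deriv_id'', _root_.deriv_cos, _root_.deriv_sinh, _root_.deriv_cosh,
    _root_.deriv_exp]
  ring

theorem deriv_F₃_s_s : deriv (fun s' => F₃_s s' l r) s = F₃_ss s l r := by
  simp (disch := fun_prop) only [F₃_s, F₃_ss, deriv_fun_add, deriv_fun_sub, deriv_fun_mul,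
    deriv.fun_neg', deriv_const', deriv_const_mul_id', deriv_const_sub_id', deriv_div_const,
    deriv_id'', _root_.deriv_sin, _root_.deriv_sinh, _root_.deriv_cosh, _root_.deriv_exp]
  ring

theorem deriv_F₃_ss_s : deriv (fun s' => F₃_ss s' l r) s = F₃_sss s l r := by
  simp (disch := fun_prop) only [F₃_ss, F₃_sss, deriv_fun_add, deriv_fun_sub, deriv_fun_mul,
    deriv.fun_neg', deriv_const', deriv_const_mul_id', deriv_div_const, deriv_id'',
    _root_.deriv_cos, _root_.deriv_sinh, _root_.deriv_cosh, _root_.deriv_exp]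
  ring

theorem deriv_F₃_l : deriv (fun l' => F₃ s l' r) l = F₃_l s l r := by
  simp (disch := fun_prop) only [F₃, F₃_l, deriv_fun_add, deriv_fun_sub, deriv_fun_mul,
    deriv_fun_pow, deriv_const', deriv_const_mul_id', deriv_div_const, deriv_id'',
    _root_.deriv_exp]
  ring

theorem deriv_F₃_l_s : deriv (fun s' => F₃_l s' l r) s = F₃_sl s l r := by
  simp (disch := fun_prop) only [F₃_l, F₃_sl, deriv_fun_add, deriv_fun_sub, deriv_fun_mul,
    deriv_fun_pow, deriv_const', deriv_const_mul_id', deriv_const_sub_id', deriv_div_const,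
    deriv_id'', _root_.deriv_cos, _root_.deriv_sinh, _root_.deriv_cosh, _root_.deriv_exp]
  ring

theorem deriv_F₃_r : deriv (fun r' => F₃ s l r') r = F₃_r s l r := by
  simp (disch := fun_prop) only [F₃, F₃_r, deriv_fun_add, deriv_fun_sub, deriv_fun_mul,
    deriv_fun_pow, deriv_const', deriv_const_mul_id', deriv_div_const, _root_.deriv_cos,
    _root_.deriv_sinh, _root_.deriv_cosh, _root_.deriv_exp]
  ring

theorem iteratedDeriv_three_F₃ : iteratedDeriv 3 (fun s' => F₃ s' l r) s = F₃_sss s l r := by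
  have h_s : deriv (fun s' => F₃ s' l r) = fun s' => F₃_s s' l r := funext (deriv_F₃_s · l r)
  have h_ss : deriv (fun s' => F₃_s s' l r) = fun s' => F₃_ss s' l r :=
    funext (deriv_F₃_s_s · l r)
  rw [iteratedDeriv_succ, iteratedDeriv_succ, iteratedDeriv_one, h_s, h_ss, deriv_F₃_ss_s]

theorem deriv_deriv_F₃_l_s :
    deriv (fun s' => deriv (fun l' => F₃ s' l' r) l) s = F₃_sl s l r := by
  simp only [deriv_F₃_l, deriv_F₃_l_s]

end PartialDerivatives

/-- F₃ satisfies ∂³F₃/∂s³ + 5·∂²F₃/∂s∂λ + 4·∂F₃/∂r + 24·∂F₃/∂s = 0 everywhere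
    (the relation α³ + 5αβ + 4γ + 24α). -/
theorem F₃_pde_first_relation (s l r : ℝ) :
    iteratedDeriv 3 (fun s' => F₃ s' l r) s
      + 5 * deriv (fun s' => deriv (fun l' => F₃ s' l' r) l) s
      + 4 * deriv (fun r' => F₃ s l r') r
      + 24 * deriv (fun s' => F₃ s' l r) s = 0 := by
  rw [iteratedDeriv_three_F₃, deriv_deriv_F₃_l_s, deriv_F₃_r, deriv_F₃_s]
  simp only [F₃_sss, F₃_sl, F₃_r, F₃_s]
  ring
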